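/- arXiv:2412.04155 — 4 statements merged into one kernel-verified Lean document; each statement's English description precedes it below -/
import Mathlib

section
/- If F : P × X ⇒ Y is C-concave with respect to a convex cone C, then the function (p,x) ↦ e(F(p,x), C) = sup_{y ∈ F(p,x)} dist(y, C) is convex on P × X. -/
open Pointwise Metric ENNReal

/-!
Write a point of `F (t • (p₁, x₁) + (1 - t) • (p₂, x₂))` as `t • a + (1 - t) • b + c` with
`a ∈ F p₁ x₁`, `b ∈ F p₂ x₂`, `c ∈ C`. A convex cone is closed under addition, so translating by
`c` maps `C` into itself and cannot increase the distance to `C`; and the distance to a convex set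
is a convex function. Hence the distance of that point to `C` is at most
`t * infDist a C + (1 - t) * infDist b C`, and taking suprema over `a` and `b` gives the claim.
-/

theorem Convex.add_mem_of_pos_smul_mem {E : Type*} [AddCommGroup E] [Module ℝ E] {C : Set E}
    (hC : Convex ℝ C) (hCone : ∀ t : ℝ, 0 < t → ∀ c ∈ C, t • c ∈ C) {u v : E}
    (hu : u ∈ C) (hv : v ∈ C) : u + v ∈ C := by
  have hmid : (2⁻¹ : ℝ) • u + (2⁻¹ : ℝ) • v ∈ C := hC hu hv (by norm_num) (by norm_num) (by norm_num)
  convert hCone 2 two_pos _ hmid using 1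
  rw [smul_add, smul_smul, smul_smul]
  norm_num

theorem Metric.infDist_add_le_of_add_mem {E : Type*} [SeminormedAddCommGroup E] {C : Set E}
    {c : E} (hc : c ∈ C) (hadd : ∀ u ∈ C, u + c ∈ C) (y : E) :
    infDist (y + c) C ≤ infDist y C :=
  calc infDist (y + c) C ≤ infDist (y + c) ((· + c) '' C) :=
        infDist_le_infDist_of_subset (Set.image_subset_iff.2 hadd) ⟨c + c, c, hc, rfl⟩
    _ = infDist y C := infDist_image (isometry_add_right c)

theorem Convex.convexOn_infDist {E : Type*} [SeminormedAddCommGroup E] [NormedSpace ℝ E]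
    {C : Set E} (hC : Convex ℝ C) : ConvexOn ℝ Set.univ fun y => infDist y C := by
  rcases C.eq_empty_or_nonempty with rfl | hne
  · simpa only [infDist_empty] using convexOn_const 0 convex_univ
  refine ⟨convex_univ, fun a _ b _ s t hs ht hst => ?_⟩
  simp only [smul_eq_mul]
  refine le_of_forall_pos_le_add fun ε hε => ?_
  obtain ⟨c₁, hc₁, hd₁⟩ := (infDist_lt_iff hne).1 (lt_add_of_pos_right (infDist a C) hε)
  obtain ⟨c₂, hc₂, hd₂⟩ := (infDist_lt_iff hne).1 (lt_add_of_pos_right (infDist b C) hε)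
  calc infDist (s • a + t • b) C ≤ dist (s • a + t • b) (s • c₁ + t • c₂) :=
        infDist_le_dist_of_mem (hC hc₁ hc₂ hs ht hst)
    _ ≤ dist (s • a) (s • c₁) + dist (t • b) (t • c₂) := dist_add_add_le _ _ _ _
    _ = s * dist a c₁ + t * dist b c₂ := by
        rw [dist_smul₀, dist_smul₀, Real.norm_of_nonneg hs, Real.norm_of_nonneg ht]
    _ ≤ s * (infDist a C + ε) + t * (infDist b C + ε) := by gcongr
    _ = s * infDist a C + t * infDist b C + ε := by linear_combination ε * hst

theorem stmt_4_general {P X Y : Type*}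
    [NormedAddCommGroup P] [NormedSpace ℝ P]
    [NormedAddCommGroup X] [NormedSpace ℝ X]
    [NormedAddCommGroup Y] [NormedSpace ℝ Y]
    (C : Set Y) (hC : Convex ℝ C)
    (hCone : ∀ t : ℝ, 0 < t → ∀ c ∈ C, t • c ∈ C)
    (F : P → X → Set Y)
    (hF : ∀ p₁ x₁ p₂ x₂, ∀ t ∈ Set.Icc (0:ℝ) 1,
      F (t • p₁ + (1 - t) • p₂) (t • x₁ + (1 - t) • x₂)
        ⊆ t • F p₁ x₁ + (1 - t) • F p₂ x₂ + C)
    (e : P → X → ℝ≥0∞)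
    (he : ∀ p x, e p x = ⨆ y ∈ F p x, ENNReal.ofReal (infDist y C)) :
    ∀ p₁ x₁ p₂ x₂, ∀ t ∈ Set.Icc (0:ℝ) 1,
      e (t • p₁ + (1 - t) • p₂) (t • x₁ + (1 - t) • x₂)
        ≤ ENNReal.ofReal t * e p₁ x₁ + ENNReal.ofReal (1 - t) * e p₂ x₂ := by
  intro p₁ x₁ p₂ x₂ t ht
  have ht' : 0 ≤ 1 - t := sub_nonneg.2 ht.2
  rw [he, he, he]
  refine iSup₂_le fun y hy => ?_
  obtain ⟨_, ⟨_, ⟨a, ha, rfl⟩, _, ⟨b, hb, rfl⟩, rfl⟩, c, hc, rfl⟩ := hF p₁ x₁ p₂ x₂ t ht hy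
  have hdist : infDist (t • a + (1 - t) • b + c) C ≤ t * infDist a C + (1 - t) * infDist b C :=
    (infDist_add_le_of_add_mem hc (fun u hu => hC.add_mem_of_pos_smul_mem hCone hu hc) _).trans
      (hC.convexOn_infDist.2 trivial trivial ht.1 ht' (add_sub_cancel t 1))
  calc ENNReal.ofReal (infDist (t • a + (1 - t) • b + c) C)
      ≤ ENNReal.ofReal t * ENNReal.ofReal (infDist a C)
          + ENNReal.ofReal (1 - t) * ENNReal.ofReal (infDist b C) := by
        rw [← ENNReal.ofReal_mul ht.1, ← ENNReal.ofReal_mul ht']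
        exact (ENNReal.ofReal_le_ofReal hdist).trans ENNReal.ofReal_add_le
    _ ≤ _ := by gcongr <;> exact le_iSup₂_of_le _ ‹_› le_rfl

/-- If `F : P × X ⇒ Y` is `C`-concave with respect to a nonempty convex cone `C`,
then `(p,x) ↦ e(F(p,x), C) = sup_{y ∈ F(p,x)} dist(y, C)` is convex
(in the extended-real sense). -/
theorem stmt_4 {P X Y : Type*}
    [NormedAddCommGroup P] [NormedSpace ℝ P]
    [NormedAddCommGroup X] [NormedSpace ℝ X]
    [NormedAddCommGroup Y] [NormedSpace ℝ Y]
    (C : Set Y) (hne : C.Nonempty) (hC : Convex ℝ C)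
    (hCone : ∀ t : ℝ, 0 < t → ∀ c ∈ C, t • c ∈ C)
    (F : P → X → Set Y)
    (hF : ∀ p₁ x₁ p₂ x₂, ∀ t ∈ Set.Icc (0:ℝ) 1,
      F (t • p₁ + (1 - t) • p₂) (t • x₁ + (1 - t) • x₂)
        ⊆ t • F p₁ x₁ + (1 - t) • F p₂ x₂ + C)
    (e : P → X → ℝ≥0∞)
    (he : ∀ p x, e p x = ⨆ y ∈ F p x, ENNReal.ofReal (infDist y C)) :
    ∀ p₁ x₁ p₂ x₂, ∀ t ∈ Set.Icc (0:ℝ) 1,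
      e (t • p₁ + (1 - t) • p₂) (t • x₁ + (1 - t) • x₂)
        ≤ ENNReal.ofReal t * e p₁ x₁ + ENNReal.ofReal (1 - t) * e p₂ x₂ :=
  stmt_4_general C hC hCone F hF e he
end

section
/- For a bounded linear operator Λ : X → Y between Banach spaces, the exact bound of open covering sur(Λ) = sup { η > 0 : Λ(B_X) ⊇ η·B_Y } (with sup ∅ = 0) equals dist(0, Λ*(B_{Y*})) computed as inf_{‖y*‖=1} ‖Λ* y*‖, where Λ* is the adjoint operator. -/
open Metric NormedSpace

/-!
A ball `η B_Y` inside `Λ(B_X)` gives `η ‖y*‖ ≤ ‖Λ* y*‖` by testing `y*` on `η B_Y`; this is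
the inequality `sur(Λ) ≤ inf_{‖y*‖ = 1} ‖Λ* y*‖`. Conversely, if `I ‖y*‖ ≤ ‖Λ* y*‖` for all `y*`,
then a point `y` outside the closed convex set `closure (Λ (‖y‖/I · B_X))` could be separated from
it by a functional violating this inequality, so `Λ` maps balls densely onto balls. Completeness
of `X` upgrades this, by the usual iteration of the open mapping theorem, to
`η B_Y ⊆ Λ(B_X)` for every `η < I`.
-/

section Iteration

variable {𝕜 X Y : Type*} [NormedField 𝕜]
  [NormedAddCommGroup X] [NormedSpace 𝕜 X] [CompleteSpace X]
  [NormedAddCommGroup Y] [NormedSpace 𝕜 Y]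

/-- Summing the approximate preimages of the successive residuals `y, r y, r² y, …`
(where `r z = z - Λ (g z)` and `g` picks approximate preimages) gives an exact preimage. -/
theorem ContinuousLinearMap.exists_preimage_norm_le_of_approx (Λ : X →L[𝕜] Y) {c ε : ℝ}
    (hc : 0 ≤ c) (hε₀ : 0 ≤ ε) (hε₁ : ε < 1)
    (happrox : ∀ y, ∃ x, ‖x‖ ≤ c * ‖y‖ ∧ ‖y - Λ x‖ ≤ ε * ‖y‖) (y : Y) :
    ∃ x, Λ x = y ∧ ‖x‖ ≤ c / (1 - ε) * ‖y‖ := by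
  choose g hg_norm hg_res using happrox
  set r : Y → Y := fun z => z - Λ (g z)
  have hr : ∀ n, ‖r^[n] y‖ ≤ ε ^ n * ‖y‖ := by
    intro n
    induction n with
    | zero => simp
    | succ n ih =>
      rw [Function.iterate_succ_apply', pow_succ', mul_assoc]
      exact (hg_res _).trans (by gcongr)
  set u : ℕ → X := fun n => g (r^[n] y)
  have hu : ∀ n, ‖u n‖ ≤ c * ‖y‖ * ε ^ n := fun n =>
    (hg_norm _).trans <| by rw [mul_assoc, mul_comm (‖y‖)]; gcongr; exact hr n
  have hgeom := (hasSum_geometric_of_lt_one hε₀ hε₁).mul_left (c * ‖y‖)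
  have hsum : Summable u := Summable.of_norm_bounded hgeom.summable hu
  have hpartial : ∀ n, Λ (∑ i ∈ Finset.range n, u i) = y - r^[n] y := fun n => by
    rw [map_sum]
    refine (Finset.sum_congr rfl fun i _ => ?_).trans (Finset.sum_range_sub' (r^[·] y) n)
    rw [Function.iterate_succ_apply']
    exact (sub_sub_cancel _ _).symm
  have hres : Filter.Tendsto (fun n => r^[n] y) Filter.atTop (nhds 0) :=
    squeeze_zero_norm hr <| by
      simpa using (tendsto_pow_atTop_nhds_zero_of_lt_one hε₀ hε₁).mul_const ‖y‖
  refine ⟨∑' n, u n, tendsto_nhds_unique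
    ((Λ.continuous.tendsto _).comp hsum.hasSum.tendsto_sum_nat) ?_, ?_⟩
  · simpa [Function.comp_def, hpartial] using tendsto_const_nhds.sub hres
  · calc ‖∑' n, u n‖ ≤ c * ‖y‖ * (1 - ε)⁻¹ := tsum_of_norm_bounded hgeom hu
      _ = c / (1 - ε) * ‖y‖ := by ring

theorem ContinuousLinearMap.exists_preimage_norm_le_of_mem_closure (Λ : X →L[𝕜] Y)
    {c c' : ℝ} (hc : 0 ≤ c) (hcc' : c < c')
    (hdense : ∀ y : Y, y ∈ closure (Λ '' closedBall 0 (c * ‖y‖))) (y : Y) :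
    ∃ x, Λ x = y ∧ ‖x‖ ≤ c' * ‖y‖ := by
  have hc' : 0 < c' := hc.trans_lt hcc'
  -- with this `ε`, `c / (1 - ε) = 2 c c' / (c + c') ≤ c'`
  set ε := (c' - c) / (2 * c')
  have hε₀ : 0 < ε := div_pos (sub_pos.2 hcc') (by positivity)
  have hε₁ : ε < 1 := by rw [div_lt_one (by positivity)]; linarith
  have hc'ε : c' * ε = (c' - c) / 2 := by simp only [ε]; field_simp
  have happrox : ∀ y, ∃ x, ‖x‖ ≤ c * ‖y‖ ∧ ‖y - Λ x‖ ≤ ε * ‖y‖ := by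
    intro y
    rcases eq_or_ne y 0 with rfl | hy
    · exact ⟨0, by simp, by simp⟩
    obtain ⟨_, ⟨x, hx, rfl⟩, hxy⟩ :=
      Metric.mem_closure_iff.1 (hdense y) _ (mul_pos hε₀ (norm_pos_iff.2 hy))
    exact ⟨x, mem_closedBall_zero_iff.1 hx, dist_eq_norm y (Λ x) ▸ hxy.le⟩
  obtain ⟨x, hx, hx_norm⟩ := Λ.exists_preimage_norm_le_of_approx hc hε₀.le hε₁ happrox y
  refine ⟨x, hx, hx_norm.trans (mul_le_mul_of_nonneg_right ?_ (norm_nonneg _))⟩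
  rw [div_le_iff₀ (by linarith), mul_sub, mul_one, hc'ε]
  linarith

end Iteration

section Duality

variable {𝕜 X Y : Type*} [RCLike 𝕜]
  [NormedAddCommGroup X] [NormedSpace 𝕜 X] [NormedAddCommGroup Y] [NormedSpace 𝕜 Y]

theorem mul_norm_le_norm_comp_of_closedBall_subset_image (Λ : X →L[𝕜] Y) {η : ℝ} (hη : 0 < η)
    (hΛ : closedBall (0 : Y) η ⊆ Λ '' closedBall (0 : X) 1) (y' : StrongDual 𝕜 Y) :
    η * ‖y'‖ ≤ ‖y'.comp Λ‖ := by
  have : ‖y'‖ ≤ ‖y'.comp Λ‖ / η := y'.opNorm_bound_of_ball_bound hη _ fun z hz => by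
    obtain ⟨x, hx, rfl⟩ := hΛ hz
    calc ‖y' (Λ x)‖ = ‖(y'.comp Λ) x‖ := rfl
      _ ≤ ‖y'.comp Λ‖ * ‖x‖ := (y'.comp Λ).le_opNorm x
      _ ≤ ‖y'.comp Λ‖ := mul_le_of_le_one_right (norm_nonneg _) (mem_closedBall_zero_iff.1 hx)
  rwa [le_div_iff₀ hη, mul_comm] at this

theorem mul_norm_le_norm_comp_of_norm_eq_one (Λ : X →L[𝕜] Y) {I : ℝ}
    (h : ∀ y' : StrongDual 𝕜 Y, ‖y'‖ = 1 → I ≤ ‖y'.comp Λ‖) (y' : StrongDual 𝕜 Y) :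
    I * ‖y'‖ ≤ ‖y'.comp Λ‖ := by
  rcases eq_or_ne y' 0 with rfl | hy'
  · simp
  have := h ((‖y'‖⁻¹ : 𝕜) • y') (norm_smul_inv_norm hy')
  rwa [ContinuousLinearMap.smul_comp, norm_smul, norm_inv, RCLike.norm_ofReal, abs_norm,
    le_inv_mul_iff₀ (norm_pos_iff.2 hy'), mul_comm] at this

end Duality

section Separation

variable {X Y : Type*} [NormedAddCommGroup X] [NormedSpace ℝ X]
  [NormedAddCommGroup Y] [NormedSpace ℝ Y]

theorem mem_closure_image_closedBall_of_mul_norm_le (Λ : X →L[ℝ] Y) {I : ℝ} (hI : 0 < I)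
    (h : ∀ y' : StrongDual ℝ Y, I * ‖y'‖ ≤ ‖y'.comp Λ‖) (y : Y) :
    y ∈ closure (Λ '' closedBall 0 (I⁻¹ * ‖y‖)) := by
  rcases eq_or_ne y 0 with rfl | hy
  · exact subset_closure ⟨0, by simp, map_zero Λ⟩
  set ρ := I⁻¹ * ‖y‖
  have hρ : 0 < ρ := by have := norm_pos_iff.2 hy; positivity
  by_contra hy_notin
  obtain ⟨f, u, hf, hfy⟩ := geometric_hahn_banach_closed_point
    ((convex_closedBall (0 : X) ρ).linear_image Λ.toLinearMap).closure isClosed_closure hy_notin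
  have hbound : ∀ x ∈ closedBall (0 : X) ρ, ‖(f.comp Λ) x‖ ≤ u := by
    intro x hx
    have hpos := hf _ (subset_closure ⟨x, hx, rfl⟩)
    have hneg := hf _ (subset_closure ⟨-x, by simpa using hx, rfl⟩)
    simp only [ContinuousLinearMap.coe_coe, map_neg] at hpos hneg
    rw [ContinuousLinearMap.comp_apply, Real.norm_eq_abs, abs_le]
    constructor <;> linarith
  have hfy_le : f y ≤ ‖f‖ * ‖y‖ := (le_abs_self _).trans (f.le_opNorm y)
  have hf_le : ‖f‖ * ‖y‖ ≤ u :=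
    calc ‖f‖ * ‖y‖ = I * ‖f‖ * ρ := by simp only [ρ]; field_simp
      _ ≤ u := (le_div_iff₀ hρ).1 ((h f).trans ((f.comp Λ).opNorm_bound_of_ball_bound hρ u hbound))
  linarith

theorem closedBall_subset_image_closedBall_of_mul_norm_le [CompleteSpace X] (Λ : X →L[ℝ] Y)
    {I η : ℝ} (hη : 0 < η) (hηI : η < I) (h : ∀ y' : StrongDual ℝ Y, I * ‖y'‖ ≤ ‖y'.comp Λ‖) :
    closedBall (0 : Y) η ⊆ Λ '' closedBall (0 : X) 1 := by
  intro y hy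
  obtain ⟨x, rfl, hx⟩ := Λ.exists_preimage_norm_le_of_mem_closure
    (inv_nonneg.2 (hη.trans hηI).le) (inv_strictAnti₀ hη hηI)
    (mem_closure_image_closedBall_of_mul_norm_le Λ (hη.trans hηI) h) y
  refine ⟨x, mem_closedBall_zero_iff.2 ?_, rfl⟩
  calc ‖x‖ ≤ η⁻¹ * ‖Λ x‖ := hx
    _ ≤ η⁻¹ * η := by gcongr; exact mem_closedBall_zero_iff.1 hy
    _ = 1 := inv_mul_cancel₀ hη.ne'

end Separation

theorem stmt_9_general {X Y : Type*}
    [NormedAddCommGroup X] [NormedSpace ℝ X] [CompleteSpace X]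
    [NormedAddCommGroup Y] [NormedSpace ℝ Y]
    (Λ : X →L[ℝ] Y) :
    sSup {η : ℝ | 0 < η ∧ closedBall (0 : Y) η ⊆ Λ '' closedBall (0 : X) 1}
      = sInf {r : ℝ | ∃ y' : StrongDual ℝ Y, ‖y'‖ = 1 ∧ r = ‖y'.comp Λ‖} := by
  set S := {η : ℝ | 0 < η ∧ closedBall (0 : Y) η ⊆ Λ '' closedBall (0 : X) 1}
  set T := {r : ℝ | ∃ y' : StrongDual ℝ Y, ‖y'‖ = 1 ∧ r = ‖y'.comp Λ‖}
  rcases subsingleton_or_nontrivial Y with hY | hY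
  · have hS : S = Set.Ioi 0 := Set.ext fun η =>
      ⟨And.left, fun hη => ⟨hη, fun y _ => ⟨0, by simp, Subsingleton.elim _ _⟩⟩⟩
    have hT : T = ∅ := Set.eq_empty_of_forall_notMem fun r ⟨y', hy', _⟩ => by
      simp [Subsingleton.elim y' 0] at hy'
    rw [hS, hT, Real.sInf_empty, Real.sSup_of_not_bddAbove (not_bddAbove_Ioi 0)]
  have hT_nonneg : ∀ r ∈ T, 0 ≤ r := by rintro _ ⟨y', -, rfl⟩; exact norm_nonneg _
  obtain ⟨r₀, hr₀⟩ : T.Nonempty := by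
    obtain ⟨y', hy'⟩ := exists_norm_eq (StrongDual ℝ Y) zero_le_one
    exact ⟨_, y', hy', rfl⟩
  have hST : ∀ η ∈ S, ∀ r ∈ T, η ≤ r := by
    rintro η ⟨hη, hΛ⟩ _ ⟨y', hy', rfl⟩
    simpa [hy'] using mul_norm_le_norm_comp_of_closedBall_subset_image Λ hη hΛ y'
  have hI_nonneg : 0 ≤ sInf T := le_csInf ⟨r₀, hr₀⟩ hT_nonneg
  refine le_antisymm ?_ ?_
  · rcases S.eq_empty_or_nonempty with hS | hS
    · rwa [hS, Real.sSup_empty]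
    · exact csSup_le hS fun η hη => le_csInf ⟨r₀, hr₀⟩ (hST η hη)
  rcases hI_nonneg.eq_or_lt with hI | hI
  · rw [← hI]
    exact Real.sSup_nonneg fun η hη => hη.1.le
  have hI_le : ∀ y' : StrongDual ℝ Y, sInf T * ‖y'‖ ≤ ‖y'.comp Λ‖ :=
    mul_norm_le_norm_comp_of_norm_eq_one Λ fun y' hy' => csInf_le ⟨0, hT_nonneg⟩ ⟨y', hy', rfl⟩
  calc sInf T = sSup (Set.Ioo 0 (sInf T)) := (csSup_Ioo hI).symm
    _ ≤ sSup S := csSup_le_csSup ⟨r₀, fun η hη => hST η hη r₀ hr₀⟩ (Set.nonempty_Ioo.2 hI)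
        fun η hη => ⟨hη.1, closedBall_subset_image_closedBall_of_mul_norm_le Λ hη.1 hη.2 hI_le⟩

/-- For a bounded linear operator `Λ : X → Y` between Banach spaces, the exact
bound of open covering `sur(Λ) = sup {η > 0 : Λ(B_X) ⊇ η B_Y}` (with `sup ∅ = 0`)
equals the Banach constant of the adjoint, `inf_{‖y*‖ = 1} ‖Λ* y*‖`. -/
theorem stmt_9 {X Y : Type*}
    [NormedAddCommGroup X] [NormedSpace ℝ X] [CompleteSpace X]
    [NormedAddCommGroup Y] [NormedSpace ℝ Y] [CompleteSpace Y]
    (Λ : X →L[ℝ] Y) :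
    sSup {η : ℝ | 0 < η ∧ closedBall (0 : Y) η ⊆ Λ '' closedBall (0 : X) 1}
      = sInf {r : ℝ | ∃ y' : StrongDual ℝ Y, ‖y'‖ = 1 ∧ r = ‖y'.comp Λ‖} :=
  stmt_9_general Λ
end

section
/- Calm problems admit penalty functions: let φ : P × X → ℝ, F : P × X ⇒ Y, C ⊆ Y a closed convex cone, p̄ ∈ P, and let x̄ be a local minimizer of φ(p̄, ·) over S(p̄) = {x : F(p̄,x) ⊆ C}. Assume (i) φ(p̄, ·) is lower semicontinuous at x̄; (ii) there exist γ, r_γ > 0 with φ(p,x) − φ(p̄,x) ≤ γ‖p − p̄‖ for all p ∈ B(p̄, r_γ), x ∈ B(x̄, r_γ); (iii) there exist β, r_β > 0 with dist(p̄, {q : F(q,x) ⊆ C}) ≤ β·e(F(p̄,x), C) for all x ∈ B(x̄, r_β); (iv) the problem at p̄ is calm at x̄. Then there exists λ* ≥ 0 such that for every λ > λ*, x̄ is an unconstrained local minimizer of x ↦ φ(p̄, x) + λ·e(F(p̄, x), C). -/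
open Metric EMetric Set ENNReal

/-!
Let `E` be the excess of `F(p̄,x)` over `C`. For infeasible `x` near `x̄` with small `E`, the error
bound (iii) yields parameters `p ≠ p̄` within about `β E` of `p̄` at which `x` is feasible; calmness
(iv) bounds `φ(p,x)` below by `φ(p̄,x̄) - μ‖p - p̄‖`, and (ii) transfers this back to `p̄`, so
`φ(p̄,x̄) ≤ φ(p̄,x) + β(γ + μ) E`. For large `E`, lower semicontinuity of `φ(p̄,·)` at `x̄` makes
the penalty term dominate. Hence `λ* = β(γ + μ)` works.
-/

open Filter Topology

theorem le_add_mul_of_infEDist_le {P : Type*} [PseudoMetricSpace P] {T : Set P} {p₀ : P}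
    {a b c d r : ℝ} (hc : 0 ≤ c) (hd₀ : 0 ≤ d) (hd : infEDist p₀ T ≤ ENNReal.ofReal d)
    (hdr : d < r) (h : ∀ p ∈ T, dist p p₀ < r → a ≤ b + c * dist p p₀) :
    a ≤ b + c * d := by
  have hlim : Tendsto (fun η : ℝ => b + c * (d + η)) (𝓝[>] 0) (𝓝 (b + c * d)) :=
    ((by fun_prop : Continuous fun η : ℝ => b + c * (d + η)).tendsto' 0 _
      (by simp)).mono_left nhdsWithin_le_nhds
  refine ge_of_tendsto hlim ?_
  filter_upwards [Ioo_mem_nhdsGT (sub_pos.2 hdr)] with η ⟨hη₀, hηr⟩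
  obtain ⟨p, hpT, hp⟩ := infEDist_lt_iff.1 <|
    hd.trans_lt ((ENNReal.ofReal_lt_ofReal_iff (by linarith)).2 (lt_add_of_pos_right d hη₀))
  have hdist : dist p p₀ < d + η := by
    rw [dist_comm]
    exact edist_lt_ofReal.1 hp
  exact (h p hpT (by linarith)).trans (by gcongr)

theorem coe_le_coe_add_coe_ofReal_mul {a b lam : ℝ} {E : ℝ≥0∞} (hlam : 0 < lam)
    (h : E ≠ ⊤ → a ≤ b + lam * E.toReal) :
    (a : EReal) ≤ b + ((ENNReal.ofReal lam * E : ℝ≥0∞) : EReal) := by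
  by_cases hE : E = ⊤
  · rw [hE, ENNReal.mul_top (by simpa using hlam), EReal.coe_ennreal_top,
      EReal.add_top_of_ne_bot (EReal.coe_ne_bot _)]
    exact le_top
  · rw [← ENNReal.ofReal_toReal hE, ← ENNReal.ofReal_mul hlam.le, EReal.coe_ennreal_ofReal,
      max_eq_left (by positivity), ← EReal.coe_add]
    exact_mod_cast h hE

section Penalty

variable {P X : Type*} [PseudoMetricSpace P] {φ : P → X → ℝ}
  {S : P → Set X} {p₀ : P} {x₀ : X}

theorem le_add_mul_of_calm {x : X} {γ μ d r : ℝ} (hγμ : 0 ≤ γ + μ) (hd₀ : 0 ≤ d)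
    (hx : x ∉ S p₀) (hd : infEDist p₀ {p | x ∈ S p} ≤ ENNReal.ofReal d) (hdr : d < r)
    (h : ∀ p ∈ ball p₀ r, φ p x - φ p₀ x ≤ γ * dist p p₀ ∧
      (p ≠ p₀ → x ∈ S p → φ p₀ x₀ - μ * dist p p₀ ≤ φ p x)) :
    φ p₀ x₀ ≤ φ p₀ x + (γ + μ) * d := by
  refine le_add_mul_of_infEDist_le hγμ hd₀ hd hdr fun p hpS hpr => ?_
  have hne : p ≠ p₀ := by
    rintro rfl
    exact hx hpS
  obtain ⟨habove, hcalm⟩ := h p hpr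
  linarith [hcalm hne hpS]

theorem isLocalMin_add_ofReal_mul_penalty [TopologicalSpace X] {e : X → ℝ≥0∞} {β γ μ lam : ℝ}
    (hβ : 0 ≤ β) (hγ : 0 ≤ γ) (hμ : 0 ≤ μ) (he : e x₀ = 0) (hmin : IsLocalMinOn (φ p₀) (S p₀) x₀)
    (hlsc : LowerSemicontinuousAt (φ p₀) x₀)
    (habove : ∀ᶠ q in 𝓝 (p₀, x₀), φ q.1 q.2 - φ p₀ q.2 ≤ γ * dist q.1 p₀)
    (hmsr : ∀ᶠ x in 𝓝 x₀, infEDist p₀ {p | x ∈ S p} ≤ ENNReal.ofReal β * e x)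
    (hcalm : ∀ᶠ q in 𝓝 (p₀, x₀),
      q.1 ≠ p₀ → q.2 ∈ S q.1 → φ p₀ x₀ - μ * dist q.1 p₀ ≤ φ q.1 q.2)
    (hlam : β * (γ + μ) < lam) :
    IsLocalMin (fun x => (φ p₀ x : EReal) + ((ENNReal.ofReal lam * e x : ℝ≥0∞) : EReal)) x₀ := by
  have hlam₀ : 0 < lam := lt_of_le_of_lt (by positivity) hlam
  rw [nhds_prod_eq] at habove hcalm
  obtain ⟨U, hU, V, hV, hUV⟩ := eventually_prod_iff.1 (habove.and hcalm)
  obtain ⟨r, hr, hUr⟩ := Metric.eventually_nhds_iff_ball.1 hU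
  set e₀ := r / (β + 1)
  have he₀ : 0 < e₀ := by positivity
  have hβe₀ : β * e₀ < r := by
    rw [mul_div_assoc', div_lt_iff₀ (by positivity)]
    linarith
  have hlsc₀ := hlsc (φ p₀ x₀ - lam * e₀) (by linarith [mul_pos hlam₀ he₀])
  filter_upwards [eventually_nhdsWithin_iff.1 hmin, hlsc₀, hV, hmsr]
    with x hxmin hxlsc hxV hxmsr
  rw [he, mul_zero, EReal.coe_ennreal_zero, add_zero]
  refine coe_le_coe_add_coe_ofReal_mul hlam₀ fun htop => ?_
  have hE₀ : 0 ≤ (e x).toReal := ENNReal.toReal_nonneg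
  by_cases hxS : x ∈ S p₀
  · linarith [hxmin hxS, mul_nonneg hlam₀.le hE₀]
  rcases lt_or_ge (e x).toReal e₀ with hsmall | hlarge
  · have hd : infEDist p₀ {p | x ∈ S p} ≤ ENNReal.ofReal (β * (e x).toReal) := by
      rwa [ENNReal.ofReal_mul hβ, ENNReal.ofReal_toReal htop]
    have hβE : β * (e x).toReal < r := lt_of_le_of_lt (by gcongr) hβe₀
    have := le_add_mul_of_calm (by positivity) (by positivity) hxS hd hβE
      fun p hp => hUV (hUr p hp) hxV
    nlinarith
  · nlinarith [hxlsc]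

end Penalty

theorem stmt_17_general {P X Y : Type*}
    [NormedAddCommGroup P] [NormedAddCommGroup X] [NormedAddCommGroup Y]
    (C : Set Y) (φ : P → X → ℝ) (F : P → X → Set Y)
    (S : P → Set X) (hS : ∀ p, S p = {x : X | F p x ⊆ C})
    (exc : P → X → ℝ≥0∞)
    (hexc : ∀ p x, exc p x = ⨆ y ∈ F p x, ENNReal.ofReal (infDist y C))
    (pb : P) (xb : X) (hfeas : xb ∈ S pb)
    -- x̄ is a local minimizer of φ(p̄,·) over S(p̄)
    (hlocmin : ∃ ρ > (0:ℝ), ∀ x ∈ S pb ∩ ball xb ρ, φ pb xb ≤ φ pb x)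
    -- (i) lower semicontinuity of φ(p̄,·) at x̄
    (hlsc : LowerSemicontinuousAt (fun x => φ pb x) xb)
    -- (ii) calmness from above of φ(·,x) at p̄, uniformly in x
    (hcalmabove : ∃ γ > (0:ℝ), ∃ rγ > (0:ℝ), ∀ p ∈ ball pb rγ, ∀ x ∈ ball xb rγ,
      φ p x - φ pb x ≤ γ * ‖p - pb‖)
    -- (iii) uniform metric subregularity type error bound
    (hmsr : ∃ β > (0:ℝ), ∃ rβ > (0:ℝ), ∀ x ∈ ball xb rβ,
      infEdist pb {q : P | F q x ⊆ C} ≤ ENNReal.ofReal β * exc pb x)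
    -- (iv) problem calmness at x̄
    (hcalm : ∃ r > (0:ℝ), ∃ μ > (0:ℝ), ∀ p ∈ ball pb r, p ≠ pb →
      ∀ x ∈ ball xb r ∩ S p, φ p x - φ pb xb ≥ -μ * ‖p - pb‖) :
    ∃ lamStar : ℝ, 0 ≤ lamStar ∧ ∀ lam : ℝ, lamStar < lam →
      ∃ ρ > (0:ℝ), ∀ x ∈ ball xb ρ,
        (φ pb xb : EReal) + (ENNReal.ofReal lam * exc pb xb : ℝ≥0∞)
          ≤ (φ pb x : EReal) + (ENNReal.ofReal lam * exc pb x : ℝ≥0∞) := by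
  obtain ⟨ρ, hρ, hmin⟩ := hlocmin
  obtain ⟨γ, hγ, rγ, hrγ, habove⟩ := hcalmabove
  obtain ⟨β, hβ, rβ, hrβ, hbound⟩ := hmsr
  obtain ⟨r, hr, μ, hμ, hcalm⟩ := hcalm
  have hexc₀ : exc pb xb = 0 := by
    rw [hS] at hfeas
    simp only [hexc, ENNReal.iSup_eq_zero]
    exact fun y hy => by rw [infDist_zero_of_mem (hfeas hy), ENNReal.ofReal_zero]
  refine ⟨β * (γ + μ), by positivity, fun lam hlam => Metric.eventually_nhds_iff_ball.1 <|
    isLocalMin_add_ofReal_mul_penalty (S := S) hβ.le hγ.le hμ.le hexc₀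
      (eventually_of_mem (inter_mem_nhdsWithin _ (ball_mem_nhds xb hρ)) hmin) hlsc ?_ ?_ ?_ hlam⟩
  · filter_upwards [prod_mem_nhds (ball_mem_nhds pb hrγ) (ball_mem_nhds xb hrγ)]
      with q ⟨hp, hx⟩
    simpa [dist_eq_norm] using habove q.1 hp q.2 hx
  · filter_upwards [ball_mem_nhds xb hrβ] with x hx
    simp only [hS, mem_ofPred_eq]
    exact hbound x hx
  · filter_upwards [prod_mem_nhds (ball_mem_nhds pb hr) (ball_mem_nhds xb hr)]
      with q ⟨hp, hx⟩ hne hxS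
    have := hcalm q.1 hp hne q.2 ⟨hx, hxS⟩
    rw [← dist_eq_norm] at this
    linarith

/-- Calm problems admit penalty functions: under lower semicontinuity of
`φ(p̄,·)` at `x̄`, uniform calmness from above of `φ(·,x)` at `p̄`, a uniform
metric-subregularity bound for the feasible map, and calmness of the problem
at `x̄`, there exists `λ* ≥ 0` such that for every `λ > λ*` the point `x̄` is an
unconstrained local minimizer of `x ↦ φ(p̄,x) + λ·e(F(p̄,x), C)`. -/
theorem stmt_17 {P X Y : Type*}
    [NormedAddCommGroup P] [NormedSpace ℝ P] [CompleteSpace P]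
    [NormedAddCommGroup X] [NormedSpace ℝ X] [CompleteSpace X]
    [NormedAddCommGroup Y] [NormedSpace ℝ Y] [CompleteSpace Y]
    (C : Set Y) (hCcl : IsClosed C) (hC : Convex ℝ C)
    (hCone : ∀ t : ℝ, 0 < t → ∀ c ∈ C, t • c ∈ C)
    (φ : P → X → ℝ) (F : P → X → Set Y)
    (S : P → Set X) (hS : ∀ p, S p = {x : X | F p x ⊆ C})
    (exc : P → X → ℝ≥0∞)
    (hexc : ∀ p x, exc p x = ⨆ y ∈ F p x, ENNReal.ofReal (infDist y C))
    (pb : P) (xb : X) (hfeas : xb ∈ S pb)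
    -- x̄ is a local minimizer of φ(p̄,·) over S(p̄)
    (hlocmin : ∃ ρ > (0:ℝ), ∀ x ∈ S pb ∩ ball xb ρ, φ pb xb ≤ φ pb x)
    -- (i) lower semicontinuity of φ(p̄,·) at x̄
    (hlsc : LowerSemicontinuousAt (fun x => φ pb x) xb)
    -- (ii) calmness from above of φ(·,x) at p̄, uniformly in x
    (hcalmabove : ∃ γ > (0:ℝ), ∃ rγ > (0:ℝ), ∀ p ∈ ball pb rγ, ∀ x ∈ ball xb rγ,
      φ p x - φ pb x ≤ γ * ‖p - pb‖)
    -- (iii) uniform metric subregularity type error bound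
    (hmsr : ∃ β > (0:ℝ), ∃ rβ > (0:ℝ), ∀ x ∈ ball xb rβ,
      infEdist pb {q : P | F q x ⊆ C} ≤ ENNReal.ofReal β * exc pb x)
    -- (iv) problem calmness at x̄
    (hcalm : ∃ r > (0:ℝ), ∃ μ > (0:ℝ), ∀ p ∈ ball pb r, p ≠ pb →
      ∀ x ∈ ball xb r ∩ S p, φ p x - φ pb xb ≥ -μ * ‖p - pb‖) :
    ∃ lamStar : ℝ, 0 ≤ lamStar ∧ ∀ lam : ℝ, lamStar < lam →
      ∃ ρ > (0:ℝ), ∀ x ∈ ball xb ρ,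
        (φ pb xb : EReal) + (ENNReal.ofReal lam * exc pb xb : ℝ≥0∞)
          ≤ (φ pb x : EReal) + (ENNReal.ofReal lam * exc pb x : ℝ≥0∞) :=
  stmt_17_general C φ F S hS exc hexc pb xb hfeas hlocmin hlsc hcalmabove hmsr hcalm
end

section
/- If two closed convex sets A, B in a normed space satisfy 0 ∈ int(A − B), then the pair (A, B) is subtransversal at every point x̄ ∈ A ∩ B: there exist κ > 0 and r > 0 such that dist(x, A ∩ B) ≤ κ·max{dist(x, A), dist(x, B)} for all x ∈ B(x̄, r). -/
/-!
Write `A_N = A ∩ B̄(x̄, N)` and `B_N = B ∩ B̄(x̄, N)`. The sets `A_N - B_N` are convex, increase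
with `N`, and exhaust the neighbourhood `A - B` of `0`, so Baire's theorem makes the closure of one
of them a neighbourhood of `0`. As `A_N - B_N` is the image of the bounded closed convex set
`A_N × B_N` under `(p, q) ↦ p - q`, a geometric-series correction argument (as in the open mapping
theorem) removes the closure at the cost of halving the radius: every `u` with `‖u‖ ≤ δ` is
`a' - b'` with `a' ∈ A`, `b' ∈ B` and `‖a' - x̄‖ ≤ N`. Now, given `a ∈ A` and `b ∈ B` close to `x`,
take `a' - b' = δ (b - a) / ‖a - b‖`; then one and the same convex combination of `a, a'` and of
`b, b'`, with weight `‖a - b‖ / (‖a - b‖ + δ)` on the second point, lies in `A ∩ B` at distance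
`O(‖a - b‖)` from `x`.
-/

open Metric Pointwise Set Filter Topology

theorem Convex.mem_of_hasSum_smul {E : Type*} [NormedAddCommGroup E] [NormedSpace ℝ E]
    {C : Set E} (hC : Convex ℝ C) (hCcl : IsClosed C) {w : ℕ → ℝ} {c : ℕ → E} {z : E}
    (hw₀ : ∀ k, 0 ≤ w k) (hw : HasSum w 1) (hc : ∀ k, c k ∈ C)
    (hz : HasSum (fun k ↦ w k • c k) z) : z ∈ C := by
  have hmass : Tendsto (fun n ↦ (Finset.range n).centerMass w c) atTop (𝓝 z) := by
    simpa [Finset.centerMass] using (hw.tendsto_sum_nat.inv₀ one_ne_zero).smul hz.tendsto_sum_nat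
  refine hCcl.mem_of_tendsto hmass ?_
  filter_upwards [hw.tendsto_sum_nat.eventually (lt_mem_nhds one_pos)] with n hn
  exact hC.centerMass_mem (fun k _ ↦ hw₀ k) hn (fun k _ ↦ hc k)

theorem ContinuousLinearMap.closedBall_subset_image_of_closedBall_subset_closure
    {E F : Type*} [NormedAddCommGroup E] [NormedSpace ℝ E] [CompleteSpace E]
    [NormedAddCommGroup F] [NormedSpace ℝ F] (L : E →L[ℝ] F) {C : Set E} (hC : Convex ℝ C)
    (hCcl : IsClosed C) (hCb : Bornology.IsBounded C) {ε : ℝ} (hε : 0 < ε)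
    (h : closedBall 0 ε ⊆ closure (L '' C)) : closedBall 0 (ε / 2) ⊆ L '' C := by
  intro u hu
  rw [mem_closedBall_zero_iff] at hu
  obtain ⟨c₀, hc₀⟩ : C.Nonempty :=
    (closure_nonempty_iff.1 ⟨0, h (mem_closedBall_self hε.le)⟩).of_image
  have happrox : ∀ y : F, ∃ c ∈ C, ‖y‖ ≤ ε → ‖y - L c‖ ≤ ε / 2 := by
    intro y
    by_cases hy : ‖y‖ ≤ ε
    · obtain ⟨_, ⟨c, hc, rfl⟩, hyc⟩ :=
        Metric.mem_closure_iff.1 (h (mem_closedBall_zero_iff.2 hy)) (ε / 2) (half_pos hε)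
      exact ⟨c, hc, fun _ ↦ (dist_eq_norm y (L c) ▸ hyc).le⟩
    · exact ⟨c₀, hc₀, fun h ↦ absurd h hy⟩
  choose g hgC hg using happrox
  -- `y k` is the residual `u - L (∑ i < k, 2⁻¹ ^ (i + 1) • g (y i))`, rescaled by `2 ^ (k + 1)`
  let y : ℕ → F := fun k ↦ Nat.rec ((2 : ℝ) • u) (fun _ yk ↦ (2 : ℝ) • (yk - L (g yk))) k
  have hy_succ : ∀ k, y (k + 1) = (2 : ℝ) • (y k - L (g (y k))) := fun _ ↦ rfl
  have hy_le : ∀ k, ‖y k‖ ≤ ε := by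
    intro k
    induction k with
    | zero => rw [show y 0 = (2 : ℝ) • u from rfl, norm_smul]; norm_num; linarith
    | succ k ih => rw [hy_succ, norm_smul]; norm_num; linarith [hg _ ih]
  set w : ℕ → ℝ := fun k ↦ (2⁻¹ : ℝ) ^ (k + 1)
  have hw : HasSum w 1 := by
    convert hasSum_geometric_two' 1 using 1
    ext k
    simp only [w, inv_pow, pow_succ]
    ring
  obtain ⟨M, hM⟩ := hCb.exists_norm_le
  have hsum : Summable fun k ↦ w k • g (y k) := by
    refine Summable.of_norm_bounded (hw.summable.mul_right M) fun k ↦ ?_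
    rw [norm_smul, Real.norm_of_nonneg (by positivity)]
    exact mul_le_mul_of_nonneg_left (hM _ (hgC _)) (by positivity)
  refine ⟨_, hC.mem_of_hasSum_smul hCcl (fun k ↦ by positivity) hw (fun k ↦ hgC _) hsum.hasSum,
    tendsto_nhds_unique ((hsum.hasSum.mapL L).tendsto_sum_nat) ?_⟩
  have htelescope : ∀ n, ∑ k ∈ Finset.range n, L (w k • g (y k))
      = u - (2⁻¹ : ℝ) ^ (n + 1) • y n := by
    intro n
    rw [← show (2⁻¹ : ℝ) ^ (0 + 1) • y 0 = u by simp [y, smul_smul],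
      ← Finset.sum_range_sub' (fun k ↦ (2⁻¹ : ℝ) ^ (k + 1) • y k)]
    refine Finset.sum_congr rfl fun k _ ↦ ?_
    rw [map_smul, hy_succ]
    module
  have hresidual : Tendsto (fun n ↦ (2⁻¹ : ℝ) ^ (n + 1) • y n) atTop (𝓝 0) := by
    refine squeeze_zero_norm (a := fun n ↦ (2⁻¹ : ℝ) ^ (n + 1) * ε) (fun n ↦ ?_) ?_
    · rw [norm_smul, Real.norm_of_nonneg (by positivity)]
      exact mul_le_mul_of_nonneg_left (hy_le n) (by positivity)
    · simpa using ((tendsto_pow_atTop_nhds_zero_of_lt_one (by norm_num : (0:ℝ) ≤ 2⁻¹)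
        (by norm_num)).comp (tendsto_add_atTop_nat 1)).mul_const ε
  simp_rw [htelescope]
  simpa using tendsto_const_nhds.sub hresidual

theorem exists_zero_mem_interior_closure_of_iUnion_mem_nhds {E : Type*} [NormedAddCommGroup E]
    [NormedSpace ℝ E] [CompleteSpace E] {D : ℕ → Set E} (hmono : Monotone D)
    (hconv : ∀ n, Convex ℝ (D n)) (hD : ⋃ n, D n ∈ 𝓝 (0 : E)) :
    ∃ n, (0 : E) ∈ interior (closure (D n)) := by
  have habsorb : ∀ x : E, ∃ m n : ℕ, ((m : ℝ) + 1)⁻¹ • x ∈ D n := by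
    intro x
    have hlim := (tendsto_one_div_add_atTop_nhds_zero_nat (𝕜 := ℝ)).smul_const x
    rw [zero_smul] at hlim
    obtain ⟨m, hm⟩ := (hlim.eventually hD).exists
    obtain ⟨n, hn⟩ := mem_iUnion.1 hm
    exact ⟨m, n, by simpa [one_div] using hn⟩
  have hcover : ⋃ p : ℕ × ℕ, ((p.1 : ℝ) + 1) • closure (D p.2) = univ := by
    refine eq_univ_of_forall fun x ↦ ?_
    obtain ⟨m, n, hmn⟩ := habsorb x
    exact mem_iUnion.2 ⟨(m, n), (mem_smul_set_iff_inv_smul_mem₀ (by positivity) _ _).2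
      (subset_closure hmn)⟩
  obtain ⟨⟨m, n⟩, hint⟩ := nonempty_interior_of_iUnion_of_closed
    (fun p ↦ isClosed_closure.smul₀ _) hcover
  rw [interior_smul₀ (by positivity)] at hint
  obtain ⟨_, ⟨v, hv, -⟩⟩ := hint
  obtain ⟨k, n', hk⟩ := habsorb (-v)
  have hsub : ∀ i ≤ max n n', closure (D i) ⊆ closure (D (max n n')) :=
    fun i hi ↦ closure_mono (hmono hi)
  set c : ℝ := ((k : ℝ) + 1)⁻¹
  have hc : 0 < c := by positivity
  -- `0` is a convex combination of the interior point `v` and the point `c • -v` of the closure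
  refine ⟨max n n', ?_⟩
  convert (hconv _).closure.combo_interior_closure_mem_interior
    (interior_mono (hsub n (le_max_left _ _)) hv)
    (subset_closure (hsub n' (le_max_right _ _) (subset_closure hk)))
    (a := c / (c + 1)) (b := 1 / (c + 1)) (by positivity) (by positivity) (by field_simp)
  module

section

variable {X : Type*} [NormedAddCommGroup X] [NormedSpace ℝ X] {A B : Set X}

theorem exists_closedBall_subset_inter_closedBall_sub_inter_closedBall [CompleteSpace X]
    (hAcl : IsClosed A) (hBcl : IsClosed B) (hAconv : Convex ℝ A) (hBconv : Convex ℝ B)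
    (h0 : (0 : X) ∈ interior (A - B)) (x₀ : X) :
    ∃ N : ℕ, ∃ δ > 0, closedBall 0 δ ⊆ (A ∩ closedBall x₀ N) - (B ∩ closedBall x₀ N) := by
  set D : ℕ → Set X := fun n ↦ (A ∩ closedBall x₀ n) - (B ∩ closedBall x₀ n)
  have hmono : Monotone D := fun m n hmn ↦
    have hball : closedBall x₀ m ⊆ closedBall x₀ n :=
      closedBall_subset_closedBall (by exact_mod_cast hmn)
    sub_subset_sub (inter_subset_inter_right _ hball) (inter_subset_inter_right _ hball)
  have hunion : ⋃ n, D n = A - B := by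
    refine (iUnion_subset fun n ↦ sub_subset_sub inter_subset_left inter_subset_left).antisymm ?_
    rintro _ ⟨a, ha, b, hb, rfl⟩
    obtain ⟨n, hn⟩ := exists_nat_ge (max (dist a x₀) (dist b x₀))
    exact mem_iUnion.2 ⟨n, sub_mem_sub ⟨ha, (le_max_left _ _).trans hn⟩
      ⟨hb, (le_max_right _ _).trans hn⟩⟩
  obtain ⟨N, hN⟩ := exists_zero_mem_interior_closure_of_iUnion_mem_nhds hmono
    (fun n ↦ (hAconv.inter (convex_closedBall _ _)).sub (hBconv.inter (convex_closedBall _ _)))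
    (hunion ▸ mem_interior_iff_mem_nhds.1 h0)
  obtain ⟨ε, hε, hball⟩ := nhds_basis_closedBall.mem_iff.1 (mem_interior_iff_mem_nhds.1 hN)
  have hD : (ContinuousLinearMap.fst ℝ X X - ContinuousLinearMap.snd ℝ X X) ''
      ((A ∩ closedBall x₀ N) ×ˢ (B ∩ closedBall x₀ N)) = D N := by
    simp [D, image_prod, image2_sub]
  refine ⟨N, ε / 2, half_pos hε, show closedBall 0 (ε / 2) ⊆ D N from ?_⟩
  rw [← hD] at hball ⊢
  exact ContinuousLinearMap.closedBall_subset_image_of_closedBall_subset_closure _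
    ((hAconv.inter (convex_closedBall _ _)).prod (hBconv.inter (convex_closedBall _ _)))
    ((hAcl.inter isClosed_closedBall).prod (hBcl.inter isClosed_closedBall))
    ((isBounded_closedBall.subset inter_subset_right).prod
      (isBounded_closedBall.subset inter_subset_right))
    hε hball

theorem exists_mem_inter_dist_le_of_closedBall_subset_sub (hAconv : Convex ℝ A)
    (hBconv : Convex ℝ B) {x₀ : X} {K δ : ℝ} (hδ : 0 < δ)
    (hreg : closedBall 0 δ ⊆ (A ∩ closedBall x₀ K) - B) {a b : X} (ha : a ∈ A) (hb : b ∈ B)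
    (x : X) : ∃ w ∈ A ∩ B, dist x w ≤ dist x a + dist a b / δ * (dist x x₀ + K) := by
  set s := dist a b
  set u : X := (δ / s) • (b - a)
  have hu : u ∈ closedBall 0 δ := by
    rw [mem_closedBall_zero_iff, norm_smul, Real.norm_of_nonneg (by positivity), ← dist_eq_norm',
      div_mul_eq_mul_div, mul_div_assoc]
    exact mul_le_of_le_one_right hδ.le (div_self_le_one s)
  obtain ⟨a', ⟨ha'A, ha'x₀⟩, b', hb'B, hab'⟩ := hreg hu
  -- `a' - b'` is `b - a` stretched to length `δ`, so one convex combination lands in `A ∩ B`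
  set t := s / (s + δ)
  have ht₀ : 0 ≤ t := by positivity
  have ht₁ : 0 ≤ 1 - t := sub_nonneg.2 (div_le_one_of_le₀ (by linarith) (by positivity))
  have hshift : t • u = (1 - t) • (b - a) := by
    rcases eq_or_ne s 0 with hs | hs
    · simp [u, dist_eq_zero.1 hs]
    · rw [smul_smul]
      congr 1
      have : s + δ ≠ 0 := by positivity
      simp only [t]
      field_simp
      ring
  have hw : (1 - t) • a + t • a' = (1 - t) • b + t • b' := by
    rw [eq_add_of_sub_eq' hab', smul_add, hshift]
    module
  refine ⟨(1 - t) • a + t • a', ⟨hAconv ha ha'A ht₁ ht₀ (sub_add_cancel 1 t),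
    hw ▸ hBconv hb hb'B ht₁ ht₀ (sub_add_cancel 1 t)⟩, ?_⟩
  have hdist := (convexOn_dist x convex_univ).2 (mem_univ a) (mem_univ a') ht₁ ht₀
    (sub_add_cancel 1 t)
  simp only [smul_eq_mul] at hdist
  have hta : (1 - t) * dist a x ≤ dist a x := mul_le_of_le_one_left dist_nonneg (by linarith)
  have ht : t ≤ s / δ :=
    div_le_div_of_nonneg_left dist_nonneg hδ (le_add_of_nonneg_left dist_nonneg)
  have ha' : dist a' x ≤ dist x x₀ + K := by
    linarith [dist_triangle a' x₀ x, dist_comm x x₀, mem_closedBall.1 ha'x₀]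
  rw [dist_comm x, dist_comm x a]
  nlinarith [mul_le_mul ht ha' dist_nonneg (by positivity)]

end

theorem stmt_18_general {X : Type*} [NormedAddCommGroup X] [NormedSpace ℝ X]
    [CompleteSpace X]
    (A B : Set X)
    (hAcl : IsClosed A) (hBcl : IsClosed B)
    (hAconv : Convex ℝ A) (hBconv : Convex ℝ B)
    (h0 : (0 : X) ∈ interior (A - B)) :
    ∀ xb ∈ A ∩ B, ∃ κ > (0:ℝ), ∃ r > (0:ℝ), ∀ x ∈ closedBall xb r,
      infDist x (A ∩ B) ≤ κ * max (infDist x A) (infDist x B) := by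
  intro xb ⟨hxA, hxB⟩
  obtain ⟨K, δ, hδ, hreg⟩ :=
    exists_closedBall_subset_inter_closedBall_sub_inter_closedBall hAcl hBcl hAconv hBconv h0 xb
  refine ⟨1 + 2 * (1 + K) / δ, by positivity, 1, one_pos, fun x hx ↦ ?_⟩
  set d := max (infDist x A) (infDist x B)
  have hbound : ∀ e > d, infDist x (A ∩ B) ≤ (1 + 2 * (1 + K) / δ) * e := by
    intro e he
    obtain ⟨a, ha, hxa⟩ := (infDist_lt_iff ⟨xb, hxA⟩).1 ((le_max_left _ _).trans_lt he)
    obtain ⟨b, hb, hxb⟩ := (infDist_lt_iff ⟨xb, hxB⟩).1 ((le_max_right _ _).trans_lt he)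
    obtain ⟨w, hw, hxw⟩ := exists_mem_inter_dist_le_of_closedBall_subset_sub hAconv hBconv hδ
      (hreg.trans (sub_subset_sub_left inter_subset_left)) ha hb x
    have hab : dist a b ≤ 2 * e := by linarith [dist_triangle_left a b x]
    have he₀ : 0 ≤ e := (le_max_of_le_left infDist_nonneg).trans he.le
    calc infDist x (A ∩ B) ≤ dist x w := infDist_le_dist_of_mem hw
      _ ≤ dist x a + dist a b / δ * (dist x xb + K) := hxw
      _ ≤ e + 2 * e / δ * (1 + K) := by
        gcongr
        exact mem_closedBall.1 hx
      _ = (1 + 2 * (1 + K) / δ) * e := by ring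
  exact ge_of_tendsto (x := 𝓝[>] d) (((continuous_const.mul continuous_id).tendsto d).mono_left
    nhdsWithin_le_nhds) (eventually_nhdsWithin_of_forall hbound)

/-- If two nonempty closed convex sets `A, B` in a Banach space satisfy
`0 ∈ int(A − B)`, then the pair `(A, B)` is subtransversal at every point of
`A ∩ B`: a local linear error bound for the intersection holds. -/
theorem stmt_18 {X : Type*} [NormedAddCommGroup X] [NormedSpace ℝ X]
    [CompleteSpace X]
    (A B : Set X) (hAne : A.Nonempty) (hBne : B.Nonempty)
    (hAcl : IsClosed A) (hBcl : IsClosed B)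
    (hAconv : Convex ℝ A) (hBconv : Convex ℝ B)
    (h0 : (0 : X) ∈ interior (A - B)) :
    ∀ xb ∈ A ∩ B, ∃ κ > (0:ℝ), ∃ r > (0:ℝ), ∀ x ∈ closedBall xb r,
      infDist x (A ∩ B) ≤ κ * max (infDist x A) (infDist x B) :=
  stmt_18_general A B hAcl hBcl hAconv hBconv h0
end
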